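/- Let n, d ≥ 1 and let P ∈ ℝ^{n×n} be symmetric, doubly stochastic and positive semidefinite, and let σ2 ∈ [0,1) be such that every eigenvalue of P associated with an eigenvector orthogonal to the all-ones vector lies in [0, σ2]. Set θ = 1/(1+√(1−σ2²)). Let X^{−1} = X^0 ∈ ℝ^{n×d} and define X^{k+1} = (1+θ)·P·X^k − θ·X^{k−1} for k = 0, 1, 2, …, and let X̄ = (1/n)·1·1ᵀ·X^0. Then for every integer L ≥ 1: ‖X^L − X̄‖_F ≤ √14 · (1 − (1 − 1/√2)·√(1−σ2))^L · ‖X^0 − X̄‖_F. -/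

import Mathlib

/-!
Let `b_i` be an orthonormal eigenbasis of `P`, with eigenvalues `μ_i`. Every column of the centred
iterate `Y^k = X^k - X̄` has eigen-coefficients `⟨b_i, Y^k⟩ = p_k(μ_i) ⟨b_i, Y^0⟩`, where `p_k`
solves the scalar recursion `p_{k+1} = (1+θ) μ p_k - θ p_{k-1}`, `p_{-1} = p_0 = 1`. Since the
columns of `Y^0` sum to zero, only eigenvalues in `[0, σ2]` carry weight. For such `μ` the
characteristic roots `√θ e^{± i φ}` are complex conjugate, so
`p_k(μ) = θ^{k/2} (cos kφ + c sin kφ)` with `1 + c² ≤ 14`, and `√θ` is at most the stated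
rate. Parseval turns the coefficient bounds into the Frobenius bound.
-/

open scoped BigOperators
open Finset

noncomputable section

/-- Frobenius norm of an `n × d` real matrix. -/
def frobNorm {n d : ℕ} (A : Matrix (Fin n) (Fin d) ℝ) : ℝ :=
  Real.sqrt (∑ i, ∑ j, (A i j) ^ 2)

open Real Matrix

/-- `gossipCoeff θ μ k = p_k(μ)`; the value at `k = 1` encodes `p_{-1} = p_0 = 1`. -/
def gossipCoeff (θ μ : ℝ) : ℕ → ℝ
  | 0 => 1
  | 1 => (1 + θ) * μ - θ
  | k + 2 => (1 + θ) * μ * gossipCoeff θ μ (k + 1) - θ * gossipCoeff θ μ k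

def gossipMomentum (σ2 : ℝ) : ℝ := 1 / (1 + √(1 - σ2 ^ 2))

def gossipRate (σ2 : ℝ) : ℝ := 1 - (1 - 1 / √2) * √(1 - σ2)

theorem eq_gossipCoeff_smul {E : Type*} [AddCommGroup E] [Module ℝ E] {θ μ : ℝ} {Z : ℤ → E}
    (hinit : Z (-1) = Z 0)
    (hrec : ∀ k : ℤ, 0 ≤ k → Z (k + 1) = ((1 + θ) * μ) • Z k - θ • Z (k - 1)) (k : ℕ) :
    Z k = gossipCoeff θ μ k • Z 0 := by
  induction k using Nat.twoStepInduction with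
  | zero => simp [gossipCoeff]
  | one =>
    have h := hrec 0 le_rfl
    rw [zero_sub, hinit] at h
    simp only [Nat.cast_one, gossipCoeff, zero_add] at h ⊢
    rw [h, sub_smul]
  | more k ih₀ ih₁ =>
    push_cast at ih₁ ⊢
    rw [show (k : ℤ) + 2 = k + 1 + 1 by ring, hrec (k + 1) (by positivity), add_sub_cancel_right,
      ih₀, ih₁, gossipCoeff]
    module

theorem cos_add_mul_sin_two_step (φ c t : ℝ) :
    cos (t + 2 * φ) + c * sin (t + 2 * φ) =
      2 * cos φ * (cos (t + φ) + c * sin (t + φ)) - (cos t + c * sin t) := by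
  simp only [cos_add, sin_add, cos_two_mul, sin_two_mul]
  ring

theorem sq_cos_add_mul_sin_le (t c : ℝ) : (cos t + c * sin t) ^ 2 ≤ 1 + c ^ 2 := by
  nlinarith [sq_nonneg (sin t - c * cos t), sin_sq_add_cos_sq t]

theorem gossipCoeff_eq_trig {θ μ r φ c : ℝ} (hr : r ^ 2 = θ) (hφ : 2 * r * cos φ = (1 + θ) * μ)
    (hc : c * sin φ = cos φ - r) (k : ℕ) :
    gossipCoeff θ μ k = r ^ k * (cos (k * φ) + c * sin (k * φ)) := by
  induction k using Nat.twoStepInduction with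
  | zero => simp [gossipCoeff]
  | one =>
    simp only [gossipCoeff, Nat.cast_one, one_mul, pow_one]
    linear_combination -hφ + hr - r * hc
  | more k ih₀ ih₁ =>
    rw [gossipCoeff, ih₀, ih₁]
    push_cast
    rw [show ((k : ℝ) + 1) * φ = k * φ + φ by ring, show ((k : ℝ) + 2) * φ = k * φ + 2 * φ by ring,
      cos_add_mul_sin_two_step]
    linear_combination (r ^ (k + 1) * (cos (k * φ + φ) + c * sin (k * φ + φ))) * hφ.symm
      + (r ^ k * (cos (k * φ) + c * sin (k * φ))) * hr

/-- The regime `x = cos φ ∈ (-1, 1)` of complex conjugate characteristic roots `r e^{± i φ}`. -/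
theorem gossipCoeff_sq_le_of_cos {θ μ r x K : ℝ} (hr : r ^ 2 = θ) (hx : 2 * r * x = (1 + θ) * μ)
    (hx1 : x ^ 2 < 1) (hK : (x - r) ^ 2 ≤ K * (1 - x ^ 2)) (k : ℕ) :
    gossipCoeff θ μ k ^ 2 ≤ (1 + K) * (r ^ k) ^ 2 := by
  obtain ⟨hx_lo, hx_hi⟩ := abs_lt.1 ((sq_lt_one_iff_abs_lt_one x).1 hx1)
  set φ := arccos x
  have hcos : cos φ = x := cos_arccos hx_lo.le hx_hi.le
  have hsin : sin φ ^ 2 = 1 - x ^ 2 := by rw [sin_arccos, sq_sqrt (by linarith)]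
  have hsin_pos : 0 < sin φ := by rw [sin_arccos]; exact sqrt_pos.2 (by linarith)
  set c := (x - r) / sin φ
  have hc : c * sin φ = cos φ - r := by rw [hcos]; exact div_mul_cancel₀ _ hsin_pos.ne'
  have hcK : c ^ 2 ≤ K := by
    have hc2 : c ^ 2 * (1 - x ^ 2) = (x - r) ^ 2 := by rw [← hsin, ← mul_pow, hc, hcos]
    exact le_of_mul_le_mul_right (hc2 ▸ hK) (by linarith)
  rw [gossipCoeff_eq_trig hr (hcos ▸ hx) hc k, mul_pow, mul_comm]
  gcongr
  linarith [sq_cos_add_mul_sin_le (k * φ) c]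

theorem one_le_sq_one_sub_mul_mul_one_add {u : ℝ} (hu0 : 0 ≤ u) (hu1 : u ≤ 1) :
    1 ≤ (1 - (1 - 1 / √2) * u) ^ 2 * (1 + u) := by
  set t := √2
  have ht : t ^ 2 = 2 := sq_sqrt (by norm_num)
  have ht0 : 0 < t := by positivity
  have hinv : 1 / t = t / 2 := by field_simp; linarith
  have hfactor : 0 ≤ t - 1 - (3 / 2 - t) * u := by nlinarith
  have hid : (1 - (1 - t / 2) * u) ^ 2 * (1 + u) - 1 =
      u * (1 - u) * (t - 1 - (3 / 2 - t) * u) := by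
    linear_combination ((u ^ 2 + u ^ 3) / 4) * ht
  rw [hinv, ← sub_nonneg, hid]
  exact mul_nonneg (mul_nonneg hu0 (sub_nonneg.2 hu1)) hfactor

theorem gossipRate_nonneg {σ2 : ℝ} (hσ0 : 0 ≤ σ2) : 0 ≤ gossipRate σ2 := by
  have h2 : 1 ≤ √2 := one_le_sqrt.2 one_le_two
  have hu : √(1 - σ2) ≤ 1 := sqrt_le_one.2 (by linarith)
  have hinv : 1 / √2 ≤ 1 := by rw [div_le_one (by positivity)]; exact h2
  have : 0 ≤ 1 / √2 := by positivity
  unfold gossipRate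
  nlinarith [sqrt_nonneg (1 - σ2)]

theorem gossipMomentum_le_gossipRate_sq {σ2 : ℝ} (hσ0 : 0 ≤ σ2) (hσ1 : σ2 ≤ 1) :
    gossipMomentum σ2 ≤ gossipRate σ2 ^ 2 := by
  set u := √(1 - σ2)
  have hu0 : 0 ≤ u := sqrt_nonneg _
  have hu1 : u ≤ 1 := sqrt_le_one.2 (by linarith)
  have hus : u ≤ √(1 - σ2 ^ 2) := sqrt_le_sqrt (by nlinarith)
  have key := one_le_sq_one_sub_mul_mul_one_add hu0 hu1
  unfold gossipMomentum
  rw [div_le_iff₀ (by positivity)]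
  unfold gossipRate
  nlinarith [sq_nonneg (1 - (1 - 1 / √2) * u)]

/- In the next two lemmas `m = (2 + s) μ / 2` with `s = √(1 - σ2²)`; then `x = √θ m` is the
cosine of the characteristic angle. -/

theorem sq_lt_one_add_of_two_mul_le {s σ2 m : ℝ} (hs0 : 0 < s) (hσ0 : 0 ≤ σ2)
    (hsσ : s ^ 2 + σ2 ^ 2 = 1) (hm0 : 0 ≤ m) (hm : 2 * m ≤ (2 + s) * σ2) : m ^ 2 < 1 + s := by
  nlinarith [mul_le_mul hm hm (by positivity) (by positivity), mul_pos hs0 hs0,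
    mul_pos (mul_pos hs0 hs0) hs0]

theorem sub_one_sq_le_of_two_mul_le {s σ2 m : ℝ} (hs0 : 0 < s) (hσ0 : 0 ≤ σ2)
    (hsσ : s ^ 2 + σ2 ^ 2 = 1) (hm0 : 0 ≤ m) (hm : 2 * m ≤ (2 + s) * σ2) :
    (m - 1) ^ 2 ≤ 13 * (1 + s - m ^ 2) := by
  set M := (2 + s) * σ2 / 2 with hMdef
  have hmM : m ≤ M := by linarith
  have hσ1 : σ2 ≤ 1 := by nlinarith
  have hM : 14 * M ^ 2 - 2 * M ≤ 12 + 13 * s := by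
    have hM2 : 4 * M ^ 2 = (2 + s) ^ 2 * (1 - s ^ 2) := by
      rw [hMdef]; linear_combination (2 + s) ^ 2 * hsσ
    have hσσ : (2 + s) * (1 - s ^ 2) ≤ 2 * M := by
      rw [hMdef]; nlinarith
    nlinarith [pow_pos hs0 2, pow_pos hs0 3, pow_pos hs0 4]
  -- `14 m² - 2 m` is convex in `m`, so it suffices to check the endpoints `0` and `M`
  have hconv : 14 * m ^ 2 - 2 * m ≤ m * (14 * M - 2) := by nlinarith
  rcases le_or_gt (14 * M - 2) 0 with hneg | hpos
  · nlinarith [mul_nonpos_of_nonneg_of_nonpos hm0 hneg]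
  · nlinarith [mul_le_mul_of_nonneg_right hmM hpos.le]

theorem gossipCoeff_sq_le {σ2 μ : ℝ} (hμ0 : 0 ≤ μ) (hμ : μ ≤ σ2) (hσ1 : σ2 < 1) (k : ℕ) :
    gossipCoeff (gossipMomentum σ2) μ k ^ 2 ≤ 14 * (gossipRate σ2 ^ k) ^ 2 := by
  have hσ0 : 0 ≤ σ2 := hμ0.trans hμ
  set s := √(1 - σ2 ^ 2)
  have hs : s ^ 2 + σ2 ^ 2 = 1 := by rw [sq_sqrt (by nlinarith)]; ring
  have hs0 : 0 < s := sqrt_pos.2 (by nlinarith)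
  set θ := gossipMomentum σ2
  have hθ0 : 0 < θ := by unfold θ gossipMomentum; positivity
  have hθs : θ * (1 + s) = 1 := by
    show 1 / (1 + s) * (1 + s) = 1
    field_simp
  set r := √θ
  have hr : r ^ 2 = θ := sq_sqrt hθ0.le
  set m := (2 + s) * μ / 2
  have hm : 2 * m ≤ (2 + s) * σ2 := by unfold m; nlinarith
  have hm1 := sq_lt_one_add_of_two_mul_le hs0 hσ0 hs (by positivity) hm
  have hm13 := sub_one_sq_le_of_two_mul_le hs0 hσ0 hs (by positivity) hm
  have hbound := gossipCoeff_sq_le_of_cos (μ := μ) (x := r * m) (K := 13) hr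
    (by unfold m; linear_combination (2 * m) * hr + μ * hθs)
    (by rw [mul_pow, hr]; nlinarith)
    (by rw [← sub_nonneg]; nlinarith)
    k
  have hr_rate : r ≤ gossipRate σ2 :=
    sqrt_le_iff.2 ⟨gossipRate_nonneg hσ0, gossipMomentum_le_gossipRate_sq hσ0 hσ1.le⟩
  calc gossipCoeff θ μ k ^ 2 ≤ (1 + 13) * (r ^ k) ^ 2 := hbound
    _ ≤ 14 * (gossipRate σ2 ^ k) ^ 2 := by norm_num; gcongr

namespace Matrix

variable {R ι κ : Type*} [CommSemiring R] [Fintype ι]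

theorem vecMul_mul_eq_smul_of_mulVec_eq {P : Matrix ι ι R} (hP : P.IsSymm) {v : ι → R} {μ : R}
    (hv : P *ᵥ v = μ • v) (A : Matrix ι κ R) : v ᵥ* (P * A) = μ • (v ᵥ* A) := by
  rw [← vecMul_vecMul, ← mulVec_transpose P v, hP.eq, hv, smul_vecMul]

theorem mul_eq_self_of_sum_row_eq_one {P : Matrix ι ι R} (hProw : ∀ i, ∑ j, P i j = 1)
    {A : Matrix ι κ R} {c : κ → R} (hA : ∀ i j, A i j = c j) : P * A = A := by
  ext i j
  simp [mul_apply, hA, ← sum_mul, hProw]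

theorem mulVec_const_of_sum_row_eq_one {P : Matrix ι ι R} (hProw : ∀ i, ∑ j, P i j = 1) (c : R) :
    P *ᵥ (fun _ => c) = fun _ => c := by
  ext i
  simp [mulVec, dotProduct, ← sum_mul, hProw]

theorem eigenvalue_eq_one_of_sum_ne_zero {K : Type*} [Field K] {P : Matrix ι ι K}
    (hPcol : ∀ j, ∑ i, P i j = 1) {v : ι → K} {μ : K} (hv : P *ᵥ v = μ • v)
    (hsum : ∑ i, v i ≠ 0) : μ = 1 := by
  have h := congrArg (fun w => ∑ i, w i) hv
  simp only [mulVec, dotProduct, Pi.smul_apply, smul_eq_mul] at h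
  rw [sum_comm, ← mul_sum] at h
  simp only [← sum_mul, hPcol, one_mul] at h
  exact (mul_eq_right₀ hsum).1 h.symm

theorem eq_const_of_mulVec_eq_self [Nonempty ι] {K : Type*} [Field K] [CharZero K]
    {P : Matrix ι ι K} (hProw : ∀ i, ∑ j, P i j = 1)
    (hfix : ∀ w : ι → K, ∑ i, w i = 0 → P *ᵥ w = w → w = 0) {v : ι → K} (hv : P *ᵥ v = v) :
    v = fun _ => (∑ i, v i) / Fintype.card ι := by
  have hcard : (Fintype.card ι : K) ≠ 0 := Nat.cast_ne_zero.2 Fintype.card_ne_zero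
  exact sub_eq_zero.1 <| hfix _ (by simp [sum_sub_distrib, mul_div_cancel₀ _ hcard])
    (by rw [mulVec_sub, hv, mulVec_const_of_sum_row_eq_one hProw])

theorem eigenvalue_mem_of_dotProduct_ne_zero {P : Matrix ι ι ℝ} (hProw : ∀ i, ∑ j, P i j = 1)
    (hPcol : ∀ j, ∑ i, P i j = 1) {σ2 : ℝ} (hσ1 : σ2 < 1)
    (heig : ∀ (μ : ℝ) (v : ι → ℝ), v ≠ 0 → (∑ i, v i) = 0 → P *ᵥ v = μ • v → 0 ≤ μ ∧ μ ≤ σ2)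
    {μ : ℝ} {v y : ι → ℝ} (hv : P *ᵥ v = μ • v) (hy : ∑ i, y i = 0) (hvy : v ⬝ᵥ y ≠ 0) :
    0 ≤ μ ∧ μ ≤ σ2 := by
  by_cases hsum : ∑ i, v i = 0
  · exact heig μ v (by rintro rfl; simp at hvy) hsum hv
  exfalso
  obtain ⟨i, -, -⟩ := exists_ne_zero_of_sum_ne_zero hsum
  have : Nonempty ι := ⟨i⟩
  have hμ := eigenvalue_eq_one_of_sum_ne_zero hPcol hv hsum
  have hfix : ∀ w : ι → ℝ, ∑ i, w i = 0 → P *ᵥ w = w → w = 0 := fun w hw hPw => by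
    by_contra hw0
    exact absurd (heig 1 w hw0 hw (by rw [hPw, one_smul])).2 (not_le.2 hσ1)
  have hconst := eq_const_of_mulVec_eq_self hProw hfix (by rw [hv, hμ, one_smul])
  apply hvy
  rw [hconst]
  simp [dotProduct, ← mul_sum, hy]

theorem sum_sq_vecMul_orthonormalBasis [Fintype κ] {m : Type*} [Fintype m]
    (b : OrthonormalBasis ι ℝ (EuclideanSpace ℝ m)) (A : Matrix m κ ℝ) :
    ∑ i, ∑ j, (⇑(b i) ᵥ* A) j ^ 2 = ∑ t, ∑ j, A t j ^ 2 := by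
  rw [sum_comm, sum_comm (γ := m)]
  refine sum_congr rfl fun j _ => ?_
  have h := b.sum_sq_inner_right (WithLp.toLp 2 fun t => A t j)
  rw [EuclideanSpace.real_norm_sq_eq] at h
  convert h using 3 with i
  simp [vecMul, dotProduct, PiLp.inner_apply, mul_comm]

end Matrix

theorem sum_sq_gossip_iterate_le {ι κ : Type*} [Fintype ι] [DecidableEq ι] [Fintype κ]
    {P : Matrix ι ι ℝ} (hPsymm : P.IsSymm) (hProw : ∀ i, ∑ j, P i j = 1)
    (hPcol : ∀ j, ∑ i, P i j = 1) {σ2 : ℝ} (hσ1 : σ2 < 1)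
    (heig : ∀ (μ : ℝ) (v : ι → ℝ), v ≠ 0 → (∑ i, v i) = 0 → P *ᵥ v = μ • v → 0 ≤ μ ∧ μ ≤ σ2)
    {Y : ℤ → Matrix ι κ ℝ} (hY0 : ∀ j, ∑ t, Y 0 t j = 0) (hinit : Y (-1) = Y 0)
    (hrec : ∀ k : ℤ, 0 ≤ k →
      Y (k + 1) = (1 + gossipMomentum σ2) • (P * Y k) - gossipMomentum σ2 • Y (k - 1))
    (L : ℕ) :
    ∑ t, ∑ j, Y L t j ^ 2 ≤ 14 * (gossipRate σ2 ^ L) ^ 2 * ∑ t, ∑ j, Y 0 t j ^ 2 := by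
  have hP : P.IsHermitian := isHermitian_iff_isSymm.2 hPsymm
  set b := hP.eigenvectorBasis
  have hcoeff (i : ι) (k : ℕ) :
      ⇑(b i) ᵥ* Y k = gossipCoeff (gossipMomentum σ2) (hP.eigenvalues i) k • (⇑(b i) ᵥ* Y 0) :=
    eq_gossipCoeff_smul (Z := fun k => ⇑(b i) ᵥ* Y k) (by rw [hinit]) (fun k hk => by
      rw [hrec k hk, vecMul_sub, vecMul_smul, vecMul_smul,
        vecMul_mul_eq_smul_of_mulVec_eq hPsymm (hP.mulVec_eigenvectorBasis i), smul_smul]) k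
  rw [← sum_sq_vecMul_orthonormalBasis b, ← sum_sq_vecMul_orthonormalBasis b, mul_sum]
  refine sum_le_sum fun i _ => ?_
  rw [mul_sum]
  refine sum_le_sum fun j _ => ?_
  rw [hcoeff i L, Pi.smul_apply, smul_eq_mul, mul_pow]
  by_cases h0 : (⇑(b i) ᵥ* Y 0) j = 0
  · simp [h0]
  obtain ⟨hμ0, hμσ⟩ := eigenvalue_mem_of_dotProduct_ne_zero hProw hPcol hσ1 heig
    (hP.mulVec_eigenvectorBasis i) (hY0 j) h0
  exact mul_le_mul_of_nonneg_right (gossipCoeff_sq_le hμ0 hμσ hσ1 L) (sq_nonneg _)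

theorem statement_0 (n d : ℕ) (hn : 1 ≤ n)
    (P : Matrix (Fin n) (Fin n) ℝ)
    (hPsymm : P.IsSymm)
    (hProw : ∀ i, ∑ j, P i j = 1)
    (hPcol : ∀ j, ∑ i, P i j = 1)
    (σ2 : ℝ) (hσ0 : 0 ≤ σ2) (hσ1 : σ2 < 1)
    (heig : ∀ (μ : ℝ) (v : Fin n → ℝ), v ≠ 0 → (∑ i, v i) = 0 →
      P.mulVec v = μ • v → 0 ≤ μ ∧ μ ≤ σ2)
    (θ : ℝ) (hθ : θ = 1 / (1 + Real.sqrt (1 - σ2 ^ 2)))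
    (X : ℤ → Matrix (Fin n) (Fin d) ℝ)
    (hinit : X (-1) = X 0)
    (hrec : ∀ k : ℤ, 0 ≤ k → X (k + 1) = (1 + θ) • (P * X k) - θ • X (k - 1))
    (Xbar : Matrix (Fin n) (Fin d) ℝ)
    (hXbar : ∀ i j, Xbar i j = (1 / (n : ℝ)) * ∑ i', X 0 i' j)
    (L : ℕ) :
    frobNorm (X L - Xbar) ≤
      Real.sqrt 14 * (1 - (1 - 1 / Real.sqrt 2) * Real.sqrt (1 - σ2)) ^ L *
        frobNorm (X 0 - Xbar) := by
  rw [show θ = gossipMomentum σ2 from hθ] at hrec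
  set Y : ℤ → Matrix (Fin n) (Fin d) ℝ := fun k => X k - Xbar
  have hPXbar : P * Xbar = Xbar := mul_eq_self_of_sum_row_eq_one hProw hXbar
  have hY0 (j : Fin d) : ∑ t, Y 0 t j = 0 := by
    have hn0 : (n : ℝ) ≠ 0 := Nat.cast_ne_zero.2 (Nat.one_le_iff_ne_zero.1 hn)
    simp [Y, hXbar, sum_sub_distrib, hn0]
  have hYrec (k : ℤ) (hk : 0 ≤ k) :
      Y (k + 1) = (1 + gossipMomentum σ2) • (P * Y k) - gossipMomentum σ2 • Y (k - 1) := by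
    simp only [Y, hrec k hk, Matrix.mul_sub, hPXbar]
    module
  have hsq := sum_sq_gossip_iterate_le hPsymm hProw hPcol hσ1 heig hY0 (by simp [Y, hinit]) hYrec L
  calc frobNorm (Y L) ≤ √(14 * (gossipRate σ2 ^ L) ^ 2 * ∑ t, ∑ j, Y 0 t j ^ 2) :=
        sqrt_le_sqrt hsq
    _ = √14 * gossipRate σ2 ^ L * frobNorm (Y 0) := by
        rw [sqrt_mul (by positivity), sqrt_mul (by positivity),
          sqrt_sq (pow_nonneg (gossipRate_nonneg hσ0) L)]
        rfl
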